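/- (Existence and uniqueness of fluid model solutions.) For every ϑ ∈ I there exists exactly one fluid model solution ζ with initial measure ϑ. -/

import Mathlib

open MeasureTheory Set Filter Topology
open scoped ENNReal

noncomputable section

namespace OverloadedFIFO

/-- The complement `G(x) = Γ((x, ∞))` of the cumulative distribution function of `Γ`. -/
def Gk (Γ : MeasureTheory.Measure ℝ) (x : ℝ) : ℝ := (Γ (Set.Ioi x)).toReal

/-- Model data: `K` job classes with arrival rates `lam`, service rates `mu`, and
deadline (patience) distributions `Γ`, in the overloaded regime `ρ > 1`.  Each `Γ k` is a
Borel probability measure on `[0,∞)` (no mass on negatives), with continuous c.d.f.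
(no atoms, in particular `Γ k {0} = 0`) and finite mean. -/
structure Data (K : ℕ) where
  lam : Fin K → ℝ
  mu : Fin K → ℝ
  Γ : Fin K → MeasureTheory.Measure ℝ
  lam_pos : ∀ k, 0 < lam k
  mu_pos : ∀ k, 0 < mu k
  Γ_prob : ∀ k, MeasureTheory.IsProbabilityMeasure (Γ k)
  Γ_null_neg : ∀ k, Γ k (Set.Iio 0) = 0
  Γ_noAtom : ∀ k, ∀ x : ℝ, Γ k {x} = 0
  Γ_finite_mean : ∀ k, MeasureTheory.Integrable id (Γ k)
  rho_gt_one : 1 < ∑ k, lam k / mu k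

instance {K : ℕ} (D : Data K) (k : Fin K) : IsProbabilityMeasure (D.Γ k) := D.Γ_prob k

/-- `ρ_k = λ_k / μ_k`. -/
def Data.rho {K : ℕ} (D : Data K) (k : Fin K) : ℝ := D.lam k / D.mu k

/-- `ρ = Σ_k ρ_k`. -/
def Data.rhoTot {K : ℕ} (D : Data K) : ℝ := ∑ k, D.rho k

/-- A workload fluid model solution: a nonnegative function `w` on `[0,∞)` satisfying
`w(t) = w(0) + Σ_k ρ_k ∫_0^t G_k(w(s)) ds − t` for all `t ≥ 0`. -/
def IsWorkloadSol {K : ℕ} (D : Data K) (w : ℝ → ℝ) : Prop :=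
  (∀ t : ℝ, 0 ≤ t → 0 ≤ w t) ∧
  (∀ k : Fin K, ∀ t : ℝ, 0 ≤ t →
    IntervalIntegrable (fun s => Gk (D.Γ k) (w s)) volume 0 t) ∧
  (∀ t : ℝ, 0 ≤ t →
    w t = w 0 + (∑ k, D.rho k * ∫ s in (0:ℝ)..t, Gk (D.Γ k) (w s)) - t)

/-- `w_l = sup {u ≥ 0 : Σ_k ρ_k G_k(u) > 1}`. -/
def wl {K : ℕ} (D : Data K) : ℝ :=
  sSup {u : ℝ | 0 ≤ u ∧ 1 < ∑ k, D.rho k * Gk (D.Γ k) u}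

/-- `w_u = sup {u ≥ 0 : Σ_k ρ_k G_k(u) ≥ 1}`. -/
def wu {K : ℕ} (D : Data K) : ℝ :=
  sSup {u : ℝ | 0 ≤ u ∧ 1 ≤ ∑ k, D.rho k * Gk (D.Γ k) u}

/-- `d_max = max_k sup {x ≥ 0 : G_k(x) > 0} ∈ (0,∞]`, as an extended nonnegative real. -/
def dmax {K : ℕ} (D : Data K) : ℝ≥0∞ :=
  ⨆ k, sSup (ENNReal.ofReal '' {x : ℝ | 0 ≤ x ∧ 0 < Gk (D.Γ k) x})

/-- `τ(t) = inf {s ∈ [0,t] : w(s) + s ≥ t}`. -/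
def tauF (w : ℝ → ℝ) (t : ℝ) : ℝ := sInf {s : ℝ | 0 ≤ s ∧ s ≤ t ∧ t ≤ w s + s}

/-- The nonnegative quadrant `[0,∞)²`. -/
def Q : Set (ℝ × ℝ) := {p | 0 ≤ p.1 ∧ 0 ≤ p.2}

/-- The shift `B_x = {y ∈ [0,∞)² : y − x ∈ B}` of a set `B ⊆ [0,∞)²`. -/
def shift (B : Set (ℝ × ℝ)) (x : ℝ × ℝ) : Set (ℝ × ℝ) :=
  {y | y ∈ Q ∧ (y.1 - x.1, y.2 - x.2) ∈ B}

/-- Diagonal shift `B_t = B_{(t,t)}`. -/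
def shiftd (B : Set (ℝ × ℝ)) (t : ℝ) : Set (ℝ × ℝ) := shift B (t, t)

/-- The set `C = ([0,∞)×{0}) ∪ ({0}×[0,∞))`. -/
def Cset : Set (ℝ × ℝ) := {p | (0 ≤ p.1 ∧ p.2 = 0) ∨ (p.1 = 0 ∧ 0 ≤ p.2)}

/-- The `κ`-enlargement `B^κ = {x ∈ [0,∞)² : inf_{y ∈ B} ‖x−y‖ < κ}` (Euclidean norm). -/
def enlarge (B : Set (ℝ × ℝ)) (κ : ℝ) : Set (ℝ × ℝ) :=
  {x | x ∈ Q ∧ ∃ y ∈ B, Real.sqrt ((x.1 - y.1) ^ 2 + (x.2 - y.2) ^ 2) < κ}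

/-- `w_ϑ = sup {x ≥ 0 : ϑ_+([x,∞)×[0,∞)) > 0}` for a `K`-tuple `ϑ` of measures on `[0,∞)²`. -/
def wMeas {K : ℕ} (ϑ : Fin K → MeasureTheory.Measure (ℝ × ℝ)) : ℝ :=
  sSup {x : ℝ | 0 ≤ x ∧ 0 < ∑ k, ϑ k (Set.Ici x ×ˢ Set.Ici (0:ℝ))}

/-- Membership in the set `I` of admissible initial measures: each `ϑ k` is a finite Borel
measure on `[0,∞)²`; (I.1) the superposition charges no corner set `C_x`, `x ∈ [0,∞)²`;
(I.2) `w_ϑ < ∞`; (I.3) `max_k G_k(w_ϑ − ε) > 0` for every `ε > 0`. -/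
def MemI {K : ℕ} (D : Data K) (ϑ : Fin K → MeasureTheory.Measure (ℝ × ℝ)) : Prop :=
  (∀ k, IsFiniteMeasure (ϑ k)) ∧
  (∀ k, ϑ k Qᶜ = 0) ∧
  (∀ x ∈ Q, (∑ k, ϑ k (shift Cset x)) = 0) ∧
  BddAbove {x : ℝ | 0 ≤ x ∧ 0 < ∑ k, ϑ k (Set.Ici x ×ˢ Set.Ici (0:ℝ))} ∧
  (∀ ε : ℝ, 0 < ε → ∃ k, 0 < Gk (D.Γ k) (wMeas ϑ - ε))

/-- `δ⁺_w`: the Dirac measure at `w` if `w > 0`, and the zero measure otherwise. -/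
def deltaPlus (w : ℝ) : MeasureTheory.Measure ℝ :=
  if 0 < w then MeasureTheory.Measure.dirac w else 0

instance (w : ℝ) : SFinite (deltaPlus w) := by
  unfold deltaPlus; split_ifs <;> infer_instance

/-- `(δ⁺_w × Γ)(B)`, as a real number. -/
def kern (Γ : MeasureTheory.Measure ℝ) (w : ℝ) (B : Set (ℝ × ℝ)) : ℝ :=
  (((deltaPlus w).prod Γ) B).toReal

/-- A (measure-valued) fluid model solution with initial measure `ϑ`: a family
`ζ(t) = (ζ_1(t),…,ζ_K(t))` of finite Borel measures on `[0,∞)²` with `ζ(0) = ϑ` satisfying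
`ζ_k(t)(B) = ϑ_k(B_t) + λ_k ∫_0^t (δ⁺_{w(s)} × Γ_k)(B_{t−s}) ds` for every Borel
`B ⊆ [0,∞)²` and `t ≥ 0`, where `w` is the (unique) workload fluid model solution with
`w(0) = w_ϑ`. -/
def IsFluidSol {K : ℕ} (D : Data K) (ϑ : Fin K → MeasureTheory.Measure (ℝ × ℝ))
    (ζ : ℝ → Fin K → MeasureTheory.Measure (ℝ × ℝ)) : Prop :=
  ∃ w : ℝ → ℝ, IsWorkloadSol D w ∧ w 0 = wMeas ϑ ∧
    (∀ t : ℝ, 0 ≤ t → ∀ k, IsFiniteMeasure (ζ t k) ∧ ζ t k Qᶜ = 0) ∧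
    (∀ k, ζ 0 k = ϑ k) ∧
    (∀ k, ∀ B : Set (ℝ × ℝ), B ⊆ Q → MeasurableSet B → ∀ t : ℝ, 0 ≤ t →
      IntervalIntegrable (fun s => kern (D.Γ k) (w s) (shiftd B (t - s))) volume 0 t ∧
      ζ t k B = ϑ k (shiftd B t) +
        ENNReal.ofReal (D.lam k * ∫ s in (0:ℝ)..t, kern (D.Γ k) (w s) (shiftd B (t - s))))

/-- The candidate invariant state `θ^w`:
`θ^w_k(B) = λ_k ∫_0^w Γ_k({p ≥ u : (w−u, p−u) ∈ B}) du`. -/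
def thetaW {K : ℕ} (D : Data K) (w : ℝ) (k : Fin K) : MeasureTheory.Measure (ℝ × ℝ) :=
  ENNReal.ofReal (D.lam k) •
    MeasureTheory.Measure.map (fun up : ℝ × ℝ => (w - up.1, up.2 - up.1))
      ((((MeasureTheory.volume.restrict (Set.Ioo (0:ℝ) w))).prod (D.Γ k)).restrict
        {up : ℝ × ℝ | up.1 ≤ up.2})

/-!
The workload equation is the integral form of the autonomous equation `w' = F(w)` with drift
`F(u) = Σ_k ρ_k G_k(u) - 1`. Since the `Γ_k` have no atoms, `F` is continuous; it is antitone,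
`F(0) = ρ - 1 > 0` and `F → -1` at infinity. `F` need not be Lipschitz, so existence goes by
separation of variables: if `F(w(0)) > 0` and `b` is the first zero of `F` above `w(0)`, the travel
time `T(x) = ∫_{w(0)}^x 1/F` is strictly increasing on `[w(0), b)`, `w = T⁻¹` until `b` is
reached, and `w = b` afterwards; the case `F(w(0)) < 0` is its mirror image. Uniqueness uses only
that `F` is antitone: wherever `w₁ > w₂` we have `F(w₁) ≤ F(w₂)`, so `w₁ - w₂` cannot become
positive.

Once the workload is fixed, the defining identity prescribes `ζ_k(t)(B)` for every Borel
`B ⊆ [0,∞)²`, so `ζ` is unique; it is realized by the shifted initial measure plus the image of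
`Leb|_(0,t] ⊗ Γ_k` under the arrival map.
-/

open ProbabilityTheory

lemma _root_.ProbabilityTheory.continuous_cdf (μ : Measure ℝ) [IsProbabilityMeasure μ]
    [NullSingletonClass μ] : Continuous (cdf μ) := by
  refine continuous_iff_continuousAt.2 fun x => ?_
  rw [(cdf μ).mono.continuousAt_iff_leftLim_eq_rightLim, StieltjesFunction.rightLim_eq]
  have h := (cdf μ).measure_singleton x
  rw [measure_cdf, measure_singleton, eq_comm, ENNReal.ofReal_eq_zero, sub_nonpos] at h
  exact le_antisymm ((cdf μ).mono.leftLim_le le_rfl) h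

lemma Gk_eq_one_sub_cdf (Γ : Measure ℝ) [IsProbabilityMeasure Γ] (x : ℝ) :
    Gk Γ x = 1 - cdf Γ x := by
  rw [Gk, cdf_eq_real, ← compl_Iic, ← measureReal_def,
    probReal_compl_eq_one_sub measurableSet_Iic]

lemma continuous_Gk (Γ : Measure ℝ) [IsProbabilityMeasure Γ] [NullSingletonClass Γ] :
    Continuous (Gk Γ) := by
  rw [funext (Gk_eq_one_sub_cdf Γ)]
  exact continuous_const.sub (continuous_cdf Γ)

lemma antitone_Gk (Γ : Measure ℝ) [IsProbabilityMeasure Γ] : Antitone (Gk Γ) := by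
  intro x y hxy
  simp only [Gk_eq_one_sub_cdf]
  linarith [(cdf Γ).mono hxy]

lemma tendsto_Gk_atTop (Γ : Measure ℝ) [IsProbabilityMeasure Γ] :
    Tendsto (Gk Γ) atTop (𝓝 0) := by
  simpa only [funext (Gk_eq_one_sub_cdf Γ), sub_self] using (tendsto_cdf_atTop Γ).const_sub 1

lemma Gk_zero (Γ : Measure ℝ) [IsProbabilityMeasure Γ] [NullSingletonClass Γ]
    (h : Γ (Iio 0) = 0) : Gk Γ 0 = 1 := by
  rw [Gk_eq_one_sub_cdf, cdf_eq_real, measureReal_def, ← Iio_union_right,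
    measure_union_null h (measure_singleton 0)]
  simp

section Trajectory

variable {F : ℝ → ℝ} {a b : ℝ}

-- Clamping at `a` makes the integrand continuous on `(-∞, b)` whenever `F > 0` on `[a, b)`.
def travelTime (F : ℝ → ℝ) (a x : ℝ) : ℝ := ∫ u in a..x, (F (max u a))⁻¹

-- The generalized inverse of `travelTime F a` on `[a, b)`: it is `b` once `b` is reached, and
-- `a` for `t ≤ 0`.
def trajectory (F : ℝ → ℝ) (a b t : ℝ) : ℝ :=
  sSup (insert a {x | x ∈ Ico a b ∧ travelTime F a x ≤ t})

lemma continuousOn_inv_speed (hF : Continuous F) (hab : a < b)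
    (hpos : ∀ x ∈ Ico a b, 0 < F x) : ContinuousOn (fun u => (F (max u a))⁻¹) (Iio b) :=
  fun u hu => ((hF.comp (continuous_id.max continuous_const)).continuousAt.inv₀
    (hpos _ ⟨le_max_right u a, max_lt hu hab⟩).ne').continuousWithinAt

lemma hasDerivAt_travelTime (hF : Continuous F) (hab : a < b)
    (hpos : ∀ x ∈ Ico a b, 0 < F x) {x : ℝ} (hx : x < b) :
    HasDerivAt (travelTime F a) (F (max x a))⁻¹ x := by
  have hcont := continuousOn_inv_speed hF hab hpos
  exact intervalIntegral.integral_hasDerivAt_right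
    (hcont.mono fun u hu => hu.2.trans_lt (max_lt hab hx)).intervalIntegrable
    (hcont.stronglyMeasurableAtFilter isOpen_Iio x hx)
    (hcont.continuousAt (Iio_mem_nhds hx))

lemma strictMonoOn_travelTime (hF : Continuous F) (hab : a < b)
    (hpos : ∀ x ∈ Ico a b, 0 < F x) : StrictMonoOn (travelTime F a) (Iio b) := by
  refine strictMonoOn_of_deriv_pos (convex_Iio b)
    (fun x hx => (hasDerivAt_travelTime hF hab hpos hx).continuousAt.continuousWithinAt)
    fun x hx => ?_
  rw [interior_Iio] at hx
  rw [(hasDerivAt_travelTime hF hab hpos hx).deriv]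
  exact inv_pos.2 (hpos _ ⟨le_max_right x a, max_lt hx hab⟩)

lemma travelTime_self : travelTime F a a = 0 := intervalIntegral.integral_same

lemma insert_travelTime_le_subset (hab : a ≤ b) (t : ℝ) :
    insert a {x | x ∈ Ico a b ∧ travelTime F a x ≤ t} ⊆ Icc a b := by
  rintro x (rfl | ⟨hx, -⟩)
  exacts [⟨le_rfl, hab⟩, Ico_subset_Icc_self hx]

lemma trajectory_mem_Icc (hab : a ≤ b) (t : ℝ) : trajectory F a b t ∈ Icc a b :=
  ⟨le_csSup (bddAbove_Icc.mono (insert_travelTime_le_subset hab t)) (mem_insert a _),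
    csSup_le (insert_nonempty _ _) fun _ hx => (insert_travelTime_le_subset hab t hx).2⟩

lemma monotone_trajectory (hab : a ≤ b) : Monotone (trajectory F a b) := fun _ _ hst =>
  csSup_le_csSup (bddAbove_Icc.mono (insert_travelTime_le_subset hab _)) (insert_nonempty _ _)
    (insert_subset_insert fun _ hx => ⟨hx.1, hx.2.trans hst⟩)

lemma trajectory_travelTime (hF : Continuous F) (hab : a < b)
    (hpos : ∀ x ∈ Ico a b, 0 < F x) {x : ℝ} (hx : x ∈ Ico a b) :
    trajectory F a b (travelTime F a x) = x := by
  refine le_antisymm (csSup_le (insert_nonempty _ _) ?_)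
    (le_csSup (bddAbove_Icc.mono (insert_travelTime_le_subset hab.le _)) (Or.inr ⟨hx, le_rfl⟩))
  rintro y (rfl | ⟨hy, hyx⟩)
  exacts [hx.1, (strictMonoOn_travelTime hF hab hpos).le_iff_le hy.2 hx.2 |>.1 hyx]

lemma continuous_trajectory (hF : Continuous F) (hab : a < b)
    (hpos : ∀ x ∈ Ico a b, 0 < F x) : Continuous (trajectory F a b) := by
  -- a monotone map into `[a, b]` whose range contains `[a, b)`
  let g : ℝ → Icc a b := fun t => ⟨trajectory F a b t, trajectory_mem_Icc hab.le t⟩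
  have hdense : DenseRange g := by
    rw [DenseRange, Subtype.dense_iff]
    refine (closure_Ico hab.ne).symm.subset.trans (closure_mono fun x hx => ?_)
    exact ⟨g (travelTime F a x), mem_range_self _, trajectory_travelTime hF hab hpos hx⟩
  exact continuous_subtype_val.comp
    (Monotone.continuous_of_denseRange (fun s t hst => monotone_trajectory hab.le hst) hdense)

lemma travelTime_trajectory (hF : Continuous F) (hab : a < b)
    (hpos : ∀ x ∈ Ico a b, 0 < F x) {t : ℝ} (ht : 0 ≤ t) (htb : trajectory F a b t < b) :
    travelTime F a (trajectory F a b t) = t := by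
  have hw := trajectory_mem_Icc (F := F) hab.le t
  obtain ⟨x, hwx, hxb⟩ := exists_between htb
  have hx : x ∈ Ico a b := ⟨hw.1.trans hwx.le, hxb⟩
  have htx : t < travelTime F a x := lt_of_not_ge fun h =>
    hwx.not_ge (le_csSup (bddAbove_Icc.mono (insert_travelTime_le_subset hab.le t))
      (Or.inr ⟨hx, h⟩))
  have hcont : ContinuousOn (travelTime F a) (Icc a x) := fun u hu =>
    (hasDerivAt_travelTime hF hab hpos (hu.2.trans_lt hxb)).continuousAt.continuousWithinAt
  obtain ⟨y, hy, rfl⟩ := intermediate_value_Icc hx.1 hcont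
    ⟨travelTime_self (F := F) ▸ ht, htx.le⟩
  rw [trajectory_travelTime hF hab hpos ⟨hy.1, hy.2.trans_lt hxb⟩]

lemma hasDerivWithinAt_trajectory (hF : Continuous F) (hab : a < b)
    (hpos : ∀ x ∈ Ico a b, 0 < F x) (hFb : F b = 0) {t : ℝ} (ht : 0 < t) :
    HasDerivWithinAt (trajectory F a b) (F (trajectory F a b t)) (Ioi t) t := by
  have hw := trajectory_mem_Icc (F := F) hab.le
  have hwc := continuous_trajectory hF hab hpos
  rcases (hw t).2.lt_or_eq with htb | htb
  · have hinv : ∀ᶠ s in 𝓝 t, travelTime F a (trajectory F a b s) = s := by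
      filter_upwards [(isOpen_Ioi.inter (isOpen_lt hwc continuous_const)).mem_nhds ⟨ht, htb⟩]
        with s hs using travelTime_trajectory hF hab hpos (le_of_lt hs.1) hs.2
    have hT := hasDerivAt_travelTime hF hab hpos htb
    have := hT.of_local_left_inverse hwc.continuousAt
      (inv_ne_zero (hpos _ ⟨le_max_right _ _, max_lt htb hab⟩).ne') hinv
    rw [inv_inv, max_eq_left (hw t).1] at this
    exact this.hasDerivWithinAt
  · -- once `b` is reached the trajectory stays there, and `F b = 0`
    rw [htb, hFb]
    refine (hasDerivWithinAt_const t _ b).congr (fun s hs => ?_) htb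
    exact le_antisymm (hw s).2 (htb.symm.le.trans (monotone_trajectory hab.le (le_of_lt hs)))

lemma trajectory_zero (hF : Continuous F) (hab : a < b) (hpos : ∀ x ∈ Ico a b, 0 < F x) :
    trajectory F a b 0 = a := by
  simpa only [travelTime_self] using
    trajectory_travelTime hF hab hpos (left_mem_Ico.2 hab)

end Trajectory

def IsIntegralSol (F w : ℝ → ℝ) : Prop :=
  ∀ t, 0 ≤ t → w t = w 0 + ∫ s in (0:ℝ)..t, F (w s)

lemma exists_isIntegralSol_of_pos_of_eq_zero {F : ℝ → ℝ} (hF : Continuous F) {a b : ℝ}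
    (hab : a < b) (hpos : ∀ x ∈ Ico a b, 0 < F x) (hFb : F b = 0) :
    ∃ w, Continuous w ∧ w 0 = a ∧ (∀ t, w t ∈ Icc a b) ∧ IsIntegralSol F w := by
  have hwc := continuous_trajectory hF hab hpos
  refine ⟨_, hwc, trajectory_zero hF hab hpos, trajectory_mem_Icc hab.le, fun t ht => ?_⟩
  rw [intervalIntegral.integral_eq_sub_of_hasDeriv_right_of_le ht hwc.continuousOn
    (fun s hs => hasDerivWithinAt_trajectory hF hab hpos hFb hs.1)
    ((hF.comp hwc).intervalIntegrable 0 t)]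
  ring

lemma exists_isIntegralSol_of_nonneg_of_nonpos {F : ℝ → ℝ} (hF : Continuous F) {a c : ℝ}
    (hac : a ≤ c) (ha : 0 ≤ F a) (hc : F c ≤ 0) :
    ∃ w, Continuous w ∧ w 0 = a ∧ (∀ t, w t ∈ Icc a c) ∧ IsIntegralSol F w := by
  set Z := {x | x ∈ Icc a c ∧ F x ≤ 0}
  have hZbdd : BddBelow Z := ⟨a, fun x hx => hx.1.1⟩
  obtain ⟨⟨haz, hzc⟩, hFz⟩ : sInf Z ∈ Z :=
    (isClosed_Icc.inter (isClosed_le hF continuous_const)).csInf_mem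
      ⟨c, ⟨hac, le_rfl⟩, hc⟩ hZbdd
  have hpos : ∀ x ∈ Ico a (sInf Z), 0 < F x := fun x hx => lt_of_not_ge fun hFx =>
    hx.2.not_ge (csInf_le hZbdd ⟨⟨hx.1, hx.2.le.trans hzc⟩, hFx⟩)
  rcases haz.eq_or_lt with hz | hz
  · refine ⟨fun _ => a, continuous_const, rfl, fun _ => ⟨le_rfl, hac⟩, fun t _ => ?_⟩
    simp [le_antisymm (hz ▸ hFz) ha]
  · have hFz0 : F (sInf Z) = 0 := le_antisymm hFz <|
      (isClosed_le continuous_const hF).closure_subset_iff.2 (fun x hx => (hpos x hx).le)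
        (closure_Ico hz.ne ▸ right_mem_Icc.2 hz.le)
    obtain ⟨w, hwc, hw0, hwI, hw⟩ := exists_isIntegralSol_of_pos_of_eq_zero hF hz hpos hFz0
    exact ⟨w, hwc, hw0, fun t => Icc_subset_Icc_right hzc (hwI t), hw⟩

lemma exists_isIntegralSol_of_nonpos_of_nonneg {F : ℝ → ℝ} (hF : Continuous F) {a c : ℝ}
    (hca : c ≤ a) (ha : F a ≤ 0) (hc : 0 ≤ F c) :
    ∃ w, Continuous w ∧ w 0 = a ∧ (∀ t, w t ∈ Icc c a) ∧ IsIntegralSol F w := by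
  obtain ⟨v, hvc, hv0, hvI, hv⟩ := exists_isIntegralSol_of_nonneg_of_nonpos
    (F := fun x => -F (-x)) (hF.comp continuous_neg).neg (neg_le_neg hca)
    (by simpa using ha) (by simpa using hc)
  refine ⟨fun t => -v t, hvc.neg, by simp [hv0], fun t => ?_, fun t ht => ?_⟩
  · obtain ⟨h1, h2⟩ := hvI t
    exact ⟨le_neg.1 h2, neg_le.1 h1⟩
  · simp only [hv t ht, intervalIntegral.integral_neg]
    ring

lemma IsIntegralSol.sub_eq_integral {F w : ℝ → ℝ} (h : IsIntegralSol F w)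
    (hi : ∀ t, 0 ≤ t → IntervalIntegrable (fun s => F (w s)) volume 0 t) {s t : ℝ}
    (hs : 0 ≤ s) (hst : s ≤ t) : w t - w s = ∫ u in s..t, F (w u) := by
  rw [h t (hs.trans hst), h s hs, add_sub_add_left_eq_sub,
    intervalIntegral.integral_interval_sub_left (hi t (hs.trans hst)) (hi s hs)]

lemma IsIntegralSol.continuousOn {F w : ℝ → ℝ} (h : IsIntegralSol F w) {t : ℝ} (ht : 0 ≤ t)
    (hi : IntervalIntegrable (fun s => F (w s)) volume 0 t) : ContinuousOn w (Icc 0 t) := by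
  have := (intervalIntegral.continuousOn_primitive_interval' hi left_mem_uIcc).const_add (w 0)
  rw [uIcc_of_le ht] at this
  exact this.congr fun s hs => h s hs.1

lemma IsIntegralSol.le_of_antitone {F w₁ w₂ : ℝ → ℝ} (hF : Antitone F)
    (h₁ : IsIntegralSol F w₁) (h₂ : IsIntegralSol F w₂)
    (hi₁ : ∀ t, 0 ≤ t → IntervalIntegrable (fun s => F (w₁ s)) volume 0 t)
    (hi₂ : ∀ t, 0 ≤ t → IntervalIntegrable (fun s => F (w₂ s)) volume 0 t)
    (h0 : w₁ 0 ≤ w₂ 0) {t : ℝ} (ht : 0 ≤ t) : w₁ t ≤ w₂ t := by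
  by_contra! hlt
  set Z := {s | s ∈ Icc 0 t ∧ w₁ s - w₂ s ≤ 0}
  have hZbdd : BddAbove Z := ⟨t, fun s hs => hs.1.2⟩
  have hZ : IsClosed Z := ((h₁.continuousOn ht (hi₁ t ht)).sub
    (h₂.continuousOn ht (hi₂ t ht))).preimage_isClosed_of_isClosed isClosed_Icc isClosed_Iic
  obtain ⟨⟨hs₀, hst⟩, hd⟩ : sSup Z ∈ Z :=
    hZ.csSup_mem ⟨0, ⟨le_rfl, ht⟩, sub_nonpos.2 h0⟩ hZbdd
  have hF_le : ∀ u ∈ Ioo (sSup Z) t, F (w₁ u) ≤ F (w₂ u) := fun u hu => hF <| le_of_lt <|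
    sub_pos.1 <| lt_of_not_ge fun hdu => hu.1.not_ge (le_csSup hZbdd
      ⟨⟨hs₀.trans hu.1.le, hu.2.le⟩, hdu⟩)
  have hint : ∀ {v : ℝ → ℝ}, (∀ t, 0 ≤ t → IntervalIntegrable (fun s => F (v s)) volume 0 t) →
      IntervalIntegrable (fun s => F (v s)) volume (sSup Z) t := fun hi =>
    (hi t ht).mono_set (uIcc_subset_uIcc (mem_uIcc_of_le hs₀ hst) right_mem_uIcc)
  have := intervalIntegral.integral_mono_on_of_le_Ioo hst (hint hi₁) (hint hi₂) hF_le
  rw [← h₁.sub_eq_integral hi₁ hs₀ hst, ← h₂.sub_eq_integral hi₂ hs₀ hst] at this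
  linarith

instance {K : ℕ} (D : Data K) (k : Fin K) : NullSingletonClass (D.Γ k) := ⟨D.Γ_noAtom k⟩

namespace Data

variable {K : ℕ} (D : Data K)

def drift (u : ℝ) : ℝ := (∑ k, D.rho k * Gk (D.Γ k) u) - 1

lemma rho_pos (k : Fin K) : 0 < D.rho k := div_pos (D.lam_pos k) (D.mu_pos k)

lemma continuous_drift : Continuous D.drift :=
  (continuous_finsetSum _ fun k _ => continuous_const.mul (continuous_Gk (D.Γ k))).sub
    continuous_const

lemma antitone_drift : Antitone D.drift := fun _ _ hxy =>
  sub_le_sub_right (Finset.sum_le_sum fun k _ =>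
    mul_le_mul_of_nonneg_left (antitone_Gk (D.Γ k) hxy) (D.rho_pos k).le) 1

lemma drift_zero_pos : 0 < D.drift 0 := by
  simp only [drift, Gk_zero (D.Γ _) (D.Γ_null_neg _), mul_one, sub_pos]
  exact D.rho_gt_one

lemma tendsto_drift_atTop : Tendsto D.drift atTop (𝓝 (-1)) := by
  have := (tendsto_finsetSum Finset.univ fun k _ =>
    (tendsto_Gk_atTop (D.Γ k)).const_mul (D.rho k)).sub_const 1
  rwa [Finset.sum_eq_zero fun k _ => mul_zero (D.rho k), zero_sub] at this

lemma integral_drift_comp {w : ℝ → ℝ} {t : ℝ}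
    (hG : ∀ k, IntervalIntegrable (fun s => Gk (D.Γ k) (w s)) volume 0 t) :
    ∫ s in (0:ℝ)..t, D.drift (w s)
      = (∑ k, D.rho k * ∫ s in (0:ℝ)..t, Gk (D.Γ k) (w s)) - t := by
  have hsum : IntervalIntegrable (fun s => ∑ k, D.rho k * Gk (D.Γ k) (w s)) volume 0 t := by
    simpa only [Finset.sum_fn] using
      IntervalIntegrable.sum Finset.univ fun k _ => (hG k).const_mul (D.rho k)
  simp only [drift]
  rw [intervalIntegral.integral_sub hsum intervalIntegrable_const,
    intervalIntegral.integral_finsetSum fun k _ => (hG k).const_mul _]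
  simp [intervalIntegral.integral_const_mul]

end Data

section Workload

variable {K : ℕ} {D : Data K} {w : ℝ → ℝ}

lemma IsWorkloadSol.intervalIntegrable_drift (h : IsWorkloadSol D w) {t : ℝ} (ht : 0 ≤ t) :
    IntervalIntegrable (fun s => D.drift (w s)) volume 0 t :=
  (IntervalIntegrable.sum Finset.univ fun k _ => (h.2.1 k t ht).const_mul (D.rho k)).sub
    (intervalIntegrable_const (c := 1)) |>.congr fun s _ => by simp [Data.drift]

lemma IsWorkloadSol.isIntegralSol (h : IsWorkloadSol D w) : IsIntegralSol D.drift w :=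
  fun t ht => by rw [D.integral_drift_comp fun k => h.2.1 k t ht, h.2.2 t ht]; ring

lemma isWorkloadSol_of_continuous (hc : Continuous w) (hnn : ∀ t, 0 ≤ t → 0 ≤ w t)
    (h : IsIntegralSol D.drift w) : IsWorkloadSol D w := by
  have hG : ∀ k t, IntervalIntegrable (fun s => Gk (D.Γ k) (w s)) volume 0 t := fun k =>
    ((continuous_Gk (D.Γ k)).comp hc).intervalIntegrable 0
  refine ⟨hnn, fun k t _ => hG k t, fun t ht => ?_⟩
  rw [h t ht, D.integral_drift_comp fun k => hG k t]
  ring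

lemma exists_isWorkloadSol (D : Data K) {w₀ : ℝ} (h₀ : 0 ≤ w₀) :
    ∃ w, Continuous w ∧ IsWorkloadSol D w ∧ w 0 = w₀ := by
  suffices ∃ w, Continuous w ∧ w 0 = w₀ ∧ (∀ t, 0 ≤ w t) ∧ IsIntegralSol D.drift w by
    obtain ⟨w, hc, h0, hnn, hw⟩ := this
    exact ⟨w, hc, isWorkloadSol_of_continuous hc (fun t _ => hnn t) hw, h0⟩
  rcases le_or_gt 0 (D.drift w₀) with hpos | hneg
  · obtain ⟨c, hc, hFc⟩ := ((D.tendsto_drift_atTop.eventually_lt_const neg_one_lt_zero).and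
      (eventually_ge_atTop w₀)).exists
    obtain ⟨w, hwc, hw0, hwI, hw⟩ :=
      exists_isIntegralSol_of_nonneg_of_nonpos D.continuous_drift hFc hpos hc.le
    exact ⟨w, hwc, hw0, fun t => h₀.trans (hwI t).1, hw⟩
  · obtain ⟨w, hwc, hw0, hwI, hw⟩ := exists_isIntegralSol_of_nonpos_of_nonneg
      D.continuous_drift h₀ hneg.le D.drift_zero_pos.le
    exact ⟨w, hwc, hw0, fun t => (hwI t).1, hw⟩

lemma IsWorkloadSol.unique {w₁ w₂ : ℝ → ℝ} (h₁ : IsWorkloadSol D w₁)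
    (h₂ : IsWorkloadSol D w₂) (h0 : w₁ 0 = w₂ 0) {t : ℝ} (ht : 0 ≤ t) : w₁ t = w₂ t :=
  have hi₁ := fun t => h₁.intervalIntegrable_drift (t := t)
  have hi₂ := fun t => h₂.intervalIntegrable_drift (t := t)
  le_antisymm
    (h₁.isIntegralSol.le_of_antitone D.antitone_drift h₂.isIntegralSol hi₁ hi₂ h0.le ht)
    (h₂.isIntegralSol.le_of_antitone D.antitone_drift h₁.isIntegralSol hi₂ hi₁ h0.ge ht)

end Workload

section Arrivals

lemma measurableSet_Q : MeasurableSet Q := measurableSet_Ici.prod measurableSet_Ici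

lemma shiftd_eq_preimage (B : Set (ℝ × ℝ)) (u : ℝ) : shiftd B u = (· - (u, u)) ⁻¹' B ∩ Q := by
  ext y
  exact and_comm

lemma measurableSet_shiftd {B : Set (ℝ × ℝ)} (hB : MeasurableSet B) (u : ℝ) :
    MeasurableSet (shiftd B u) := by
  rw [shiftd_eq_preimage]
  exact (measurable_sub_const _ hB).inter measurableSet_Q

variable (Γ : Measure ℝ)

lemma deltaPlus_prod_apply [SFinite Γ] (v : ℝ) {S : Set (ℝ × ℝ)} (hS : MeasurableSet S) :
    (deltaPlus v).prod Γ S = if 0 < v then Γ (Prod.mk v ⁻¹' S) else 0 := by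
  unfold deltaPlus
  split_ifs
  · rw [Measure.dirac_prod, Measure.map_apply measurable_prodMk_left hS]
  · rw [Measure.zero_prod, Measure.coe_zero, Pi.zero_apply]

lemma deltaPlus_prod_le_one [IsProbabilityMeasure Γ] (v : ℝ) (S : Set (ℝ × ℝ)) :
    (deltaPlus v).prod Γ S ≤ 1 := by
  refine (measure_mono (subset_univ S)).trans ?_
  rw [← univ_prod_univ, Measure.prod_prod, measure_univ (μ := Γ), mul_one]
  unfold deltaPlus
  split_ifs <;> simp

lemma kern_le_one [IsProbabilityMeasure Γ] (v : ℝ) (S : Set (ℝ × ℝ)) : kern Γ v S ≤ 1 :=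
  ENNReal.toReal_le_of_le_ofReal zero_le_one (by simpa using deltaPlus_prod_le_one Γ v S)

def arrivalSet (w : ℝ → ℝ) : Set (ℝ × ℝ) := {sp | 0 < w sp.1 ∧ 0 ≤ sp.2}

def arrivalPoint (w : ℝ → ℝ) (t : ℝ) (sp : ℝ × ℝ) : ℝ × ℝ :=
  (w sp.1 - (t - sp.1), sp.2 - (t - sp.1))

-- Arrivals at times `s ∈ (0, t]` with patience `p`, admitted only when `w s > 0` as in `δ⁺`,
-- seen at time `t`.
def arrivals (w : ℝ → ℝ) (t : ℝ) : Measure (ℝ × ℝ) :=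
  (((volume.restrict (Ioc 0 t)).prod Γ).restrict (arrivalSet w)).map (arrivalPoint w t)

variable {w : ℝ → ℝ}

lemma measurable_arrivalPoint (hw : Measurable w) (t : ℝ) : Measurable (arrivalPoint w t) :=
  ((hw.comp measurable_fst).sub (measurable_const.sub measurable_fst)).prodMk
    (measurable_snd.sub (measurable_const.sub measurable_fst))

lemma measurableSet_arrivalSet (hw : Measurable w) : MeasurableSet (arrivalSet w) :=
  (hw.comp measurable_fst measurableSet_Ioi).inter (measurable_snd measurableSet_Ici)

lemma deltaPlus_prod_shiftd [SFinite Γ] (t s : ℝ) {B : Set (ℝ × ℝ)} (hB : MeasurableSet B) :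
    (deltaPlus (w s)).prod Γ (shiftd B (t - s))
      = Γ (Prod.mk s ⁻¹' (arrivalPoint w t ⁻¹' B ∩ arrivalSet w)) := by
  rw [deltaPlus_prod_apply Γ _ (measurableSet_shiftd hB _)]
  split_ifs with hws
  · congr 1
    ext p
    simp only [mem_preimage, mem_inter_iff, shiftd, shift, Q, arrivalPoint, arrivalSet]
    exact ⟨fun h => ⟨h.2, hws, h.1.2⟩, fun h => ⟨⟨hws.le, h.2.2⟩, h.1⟩⟩
  · convert (measure_empty (μ := Γ)).symm
    ext p
    simp [arrivalSet, hws]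

lemma arrivals_apply [SFinite Γ] (hw : Measurable w) (t : ℝ) {B : Set (ℝ × ℝ)}
    (hB : MeasurableSet B) :
    arrivals Γ w t B = ∫⁻ s in Ioc 0 t, (deltaPlus (w s)).prod Γ (shiftd B (t - s)) := by
  have hE := (measurable_arrivalPoint hw t hB).inter (measurableSet_arrivalSet hw)
  rw [arrivals, Measure.map_apply (measurable_arrivalPoint hw t) hB,
    Measure.restrict_apply (measurable_arrivalPoint hw t hB), Measure.prod_apply hE]
  simp only [deltaPlus_prod_shiftd Γ t _ hB]

instance [IsFiniteMeasure Γ] (w : ℝ → ℝ) (t : ℝ) : IsFiniteMeasure (arrivals Γ w t) := by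
  unfold arrivals
  infer_instance

lemma measurable_kern_shiftd [SFinite Γ] (hw : Measurable w) (t : ℝ) {B : Set (ℝ × ℝ)}
    (hB : MeasurableSet B) : Measurable fun s => kern Γ (w s) (shiftd B (t - s)) := by
  simp only [kern, deltaPlus_prod_shiftd Γ t _ hB]
  exact (measurable_measure_prodMk_left
    ((measurable_arrivalPoint hw t hB).inter (measurableSet_arrivalSet hw))).ennreal_toReal

lemma intervalIntegrable_kern_shiftd [IsProbabilityMeasure Γ] (hw : Measurable w) (t : ℝ)
    {B : Set (ℝ × ℝ)} (hB : MeasurableSet B) :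
    IntervalIntegrable (fun s => kern Γ (w s) (shiftd B (t - s))) volume 0 t := by
  refine (intervalIntegrable_const (c := (1 : ℝ))).mono_fun
    (measurable_kern_shiftd Γ hw t hB).aestronglyMeasurable (.of_forall fun s => ?_)
  change ‖kern Γ (w s) _‖ ≤ ‖(1 : ℝ)‖
  rw [norm_one, Real.norm_of_nonneg (by exact ENNReal.toReal_nonneg)]
  exact kern_le_one Γ (w s) _

end Arrivals

lemma _root_.MeasureTheory.Measure.ext_of_compl_null {α : Type*} [MeasurableSpace α]
    {μ ν : Measure α} {s : Set α} (hs : MeasurableSet s) (hμ : μ sᶜ = 0) (hν : ν sᶜ = 0)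
    (h : ∀ B ⊆ s, MeasurableSet B → μ B = ν B) : μ = ν :=
  Measure.ext fun B hB => by
    rw [← measure_inter_conull hμ, ← measure_inter_conull hν]
    exact h _ inter_subset_right (hB.inter hs)

lemma wMeas_nonneg {K : ℕ} (ϑ : Fin K → Measure (ℝ × ℝ)) : 0 ≤ wMeas ϑ :=
  Real.sSup_nonneg fun _ hx => hx.1

section FluidSol

variable {K : ℕ} (D : Data K) (ϑ : Fin K → Measure (ℝ × ℝ))

def fluidSol (w : ℝ → ℝ) (t : ℝ) (k : Fin K) : Measure (ℝ × ℝ) :=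
  ((ϑ k).map (· - (t, t)) + ENNReal.ofReal (D.lam k) • arrivals (D.Γ k) w t).restrict Q

lemma fluidSol_apply {k : Fin K} (hQc : ϑ k Qᶜ = 0) {w : ℝ → ℝ} (hw : Measurable w) {t : ℝ}
    (ht : 0 ≤ t) {B : Set (ℝ × ℝ)} (hBQ : B ⊆ Q) (hB : MeasurableSet B) :
    fluidSol D ϑ w t k B = ϑ k (shiftd B t) +
      ENNReal.ofReal (D.lam k * ∫ s in (0:ℝ)..t, kern (D.Γ k) (w s) (shiftd B (t - s))) := by
  have hint := intervalIntegrable_kern_shiftd (D.Γ k) hw t hB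
  rw [fluidSol, Measure.restrict_apply hB, inter_eq_self_of_subset_left hBQ,
    Measure.add_apply, Measure.map_apply (measurable_sub_const _) hB, shiftd_eq_preimage,
    measure_inter_conull hQc, Measure.smul_apply, smul_eq_mul, arrivals_apply _ hw t hB,
    ENNReal.ofReal_mul (D.lam_pos k).le, intervalIntegral.integral_of_le ht,
    ofReal_integral_eq_lintegral_ofReal ((intervalIntegrable_iff_integrableOn_Ioc_of_le ht).1 hint)
      (.of_forall fun _ => ENNReal.toReal_nonneg)]
  congr 2
  refine lintegral_congr fun s => (ENNReal.ofReal_toReal ?_).symm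
  exact ne_top_of_le_ne_top ENNReal.one_ne_top (deltaPlus_prod_le_one _ _ _)

lemma fluidSol_zero {k : Fin K} (hQc : ϑ k Qᶜ = 0) (w : ℝ → ℝ) : fluidSol D ϑ w 0 k = ϑ k := by
  have harr : arrivals (D.Γ k) w 0 = 0 := by
    rw [arrivals, Ioc_self, Measure.restrict_empty, Measure.zero_prod, Measure.restrict_zero,
      Measure.map_zero]
  rw [fluidSol, harr, smul_zero, add_zero, Prod.mk_zero_zero]
  simp only [sub_zero, Measure.map_id']
  exact Measure.restrict_eq_self_of_ae_mem (ae_iff.2 hQc)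

instance {k : Fin K} [IsFiniteMeasure (ϑ k)] (w : ℝ → ℝ) (t : ℝ) :
    IsFiniteMeasure (fluidSol D ϑ w t k) := by
  have : IsFiniteMeasure (ENNReal.ofReal (D.lam k) • arrivals (D.Γ k) w t) :=
    ⟨ENNReal.mul_lt_top ENNReal.ofReal_lt_top (measure_lt_top _ _)⟩
  unfold fluidSol
  infer_instance

lemma isFluidSol_fluidSol (hfin : ∀ k, IsFiniteMeasure (ϑ k)) (hQc : ∀ k, ϑ k Qᶜ = 0)
    {w : ℝ → ℝ} (hwc : Continuous w) (hw : IsWorkloadSol D w) (hw0 : w 0 = wMeas ϑ) :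
    IsFluidSol D ϑ (fluidSol D ϑ w) :=
  ⟨w, hw, hw0, fun t _ k => ⟨inferInstance, by
      rw [fluidSol, Measure.restrict_apply measurableSet_Q.compl, compl_inter_self, measure_empty]⟩,
    fun k => fluidSol_zero D ϑ (hQc k) w, fun k B hBQ hB t ht =>
      ⟨intervalIntegrable_kern_shiftd _ hwc.measurable t hB,
        fluidSol_apply D ϑ (hQc k) hwc.measurable ht hBQ hB⟩⟩

end FluidSol

lemma IsFluidSol.unique {K : ℕ} {D : Data K} {ϑ : Fin K → Measure (ℝ × ℝ)}
    {ζ₁ ζ₂ : ℝ → Fin K → Measure (ℝ × ℝ)} (h₁ : IsFluidSol D ϑ ζ₁) (h₂ : IsFluidSol D ϑ ζ₂)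
    {t : ℝ} (ht : 0 ≤ t) (k : Fin K) : ζ₁ t k = ζ₂ t k := by
  obtain ⟨w₁, hw₁, hw₁0, hQ₁, -, hζ₁⟩ := h₁
  obtain ⟨w₂, hw₂, hw₂0, hQ₂, -, hζ₂⟩ := h₂
  refine Measure.ext_of_compl_null measurableSet_Q (hQ₁ t ht k).2 (hQ₂ t ht k).2
    fun B hBQ hB => ?_
  rw [(hζ₁ k B hBQ hB t ht).2, (hζ₂ k B hBQ hB t ht).2]
  congr 3
  refine intervalIntegral.integral_congr fun s hs => ?_
  rw [uIcc_of_le ht] at hs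
  simp only [hw₁.unique hw₂ (hw₁0.trans hw₂0.symm) hs.1]

/-- For every `ϑ ∈ I` there exists exactly one fluid model solution with
initial measure `ϑ` (unique on `[0,∞)`). -/
theorem fluid_exists_unique {K : ℕ} (D : Data K)
    (ϑ : Fin K → MeasureTheory.Measure (ℝ × ℝ)) (hϑ : MemI D ϑ) :
    (∃ ζ : ℝ → Fin K → MeasureTheory.Measure (ℝ × ℝ), IsFluidSol D ϑ ζ) ∧
    (∀ ζ₁ ζ₂ : ℝ → Fin K → MeasureTheory.Measure (ℝ × ℝ),
      IsFluidSol D ϑ ζ₁ → IsFluidSol D ϑ ζ₂ →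
      ∀ t : ℝ, 0 ≤ t → ∀ k, ζ₁ t k = ζ₂ t k) := by
  obtain ⟨hfin, hQc, -⟩ := hϑ
  obtain ⟨w, hwc, hw, hw0⟩ := exists_isWorkloadSol D (wMeas_nonneg ϑ)
  exact ⟨⟨_, isFluidSol_fluidSol D ϑ hfin hQc hwc hw hw0⟩,
    fun ζ₁ ζ₂ h₁ h₂ t ht k => h₁.unique h₂ ht k⟩

end OverloadedFIFO
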